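/- Ky Fan maximum principle: for a Hermitian n×n matrix O and any orthogonal projection P of rank m, the trace Tr(P O P) is at most the sum of the m largest eigenvalues of O. -/

import Mathlib

/-- Partial sum of the first `m` entries of a vector in `ℝ^n`. -/
def pSum {n : ℕ} (x : Fin n → ℝ) (m : ℕ) : ℝ :=
  ∑ i : Fin n, if (i : ℕ) < m then x i else 0

/-- `μ` is the decreasingly sorted eigenvalue vector of a Hermitian matrix. -/
def IsSortedEig {n : ℕ} {A : Matrix (Fin n) (Fin n) ℂ} (hA : A.IsHermitian)
    (μ : Fin n → ℝ) : Prop :=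
  Antitone μ ∧ ∃ σ : Equiv.Perm (Fin n), ∀ i, μ i = hA.eigenvalues (σ i)

/-!
Diagonalise `O = U D U*`. Then `Tr(P O P) = Tr(O P) = ∑ λᵢ qᵢ`, where the `qᵢ` are the diagonal
entries of the projection `Q = U* P U`. Since `0 ≤ Q ≤ 1` in the Loewner order, every `qᵢ` lies in
`[0, 1]`, and `∑ qᵢ = Tr P = rank P = m`. Among weights in `[0, 1]` of total mass `m`, `∑ λᵢ qᵢ` is
largest when the whole mass sits on the `m` largest eigenvalues: for a threshold `c` separating
them from the others, every term of `∑ (λᵢ - c) (qᵢ - [i < m])` is `≤ 0`.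
-/

open Matrix

theorem Antitone.exists_threshold {n : ℕ} {μ : Fin n → ℝ} (hμ : Antitone μ) (m : ℕ) :
    ∃ c, ∀ i : Fin n, ((i : ℕ) < m → c ≤ μ i) ∧ (m ≤ (i : ℕ) → μ i ≤ c) := by
  by_cases hm : m < n
  · exact ⟨μ ⟨m, hm⟩, fun i => ⟨fun hi => hμ (Fin.le_def.mpr hi.le), fun hi => hμ hi⟩⟩
  · refine ⟨-∑ j, |μ j|, fun i => ⟨fun _ => ?_, fun hi => absurd i.isLt (by omega)⟩⟩
    have := Finset.single_le_sum (fun j _ => abs_nonneg (μ j)) (Finset.mem_univ i)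
    linarith [neg_abs_le (μ i)]

theorem sum_mul_le_pSum {n m : ℕ} {μ s : Fin n → ℝ} (hμ : Antitone μ)
    (hs : ∀ i, s i ∈ Set.Icc (0 : ℝ) 1) (hsum : ∑ i, s i = m) :
    ∑ i, μ i * s i ≤ pSum μ m := by
  set e : Fin n → ℝ := fun i => if (i : ℕ) < m then 1 else 0
  have hm : m ≤ n := by
    have : ∑ i, s i ≤ ∑ _i : Fin n, (1 : ℝ) := Finset.sum_le_sum fun i _ => (hs i).2
    simp only [hsum, Finset.sum_const, Finset.card_univ, Fintype.card_fin, nsmul_eq_mul,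
      mul_one] at this
    exact_mod_cast this
  have he : ∑ i, e i = m := by
    simp [e, Finset.sum_boole, Fin.card_filter_val_lt, hm]
  have hpSum : pSum μ m = ∑ i, μ i * e i := by
    simp [pSum, e]
  obtain ⟨c, hc⟩ := hμ.exists_threshold m
  have hterms : ∑ i, (μ i - c) * (s i - e i) ≤ 0 := by
    refine Finset.sum_nonpos fun i _ => ?_
    by_cases hi : (i : ℕ) < m
    · simp only [e, if_pos hi]
      exact mul_nonpos_of_nonneg_of_nonpos (by linarith [(hc i).1 hi]) (by linarith [(hs i).2])
    · simp only [e, if_neg hi]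
      exact mul_nonpos_of_nonpos_of_nonneg (by linarith [(hc i).2 (by omega)])
        (by linarith [(hs i).1])
  calc ∑ i, μ i * s i
      = ∑ i, μ i * e i + ∑ i, (μ i - c) * (s i - e i) + c * (∑ i, s i - ∑ i, e i) := by
        simp only [sub_mul, mul_sub, Finset.sum_sub_distrib, Finset.mul_sum]
        ring
    _ ≤ pSum μ m := by rw [hsum, he, hpSum]; linarith

theorem Matrix.trace_eq_rank_of_isIdempotentElem {K ι : Type*} [Field K] [Fintype ι]
    [DecidableEq ι] {P : Matrix ι ι K} (hP : IsIdempotentElem P) : P.trace = P.rank := by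
  rw [← trace_toLin'_eq]
  exact (LinearMap.IsIdempotentElem.isProj_range _ (hP.map toLinAlgEquiv')).trace

open scoped ComplexOrder MatrixOrder in
theorem Matrix.re_diag_mem_Icc_of_isStarProjection {𝕜 ι : Type*} [RCLike 𝕜] [Fintype ι]
    {Q : Matrix ι ι 𝕜} (hQ : IsStarProjection Q) (i : ι) : RCLike.re (Q i i) ∈ Set.Icc 0 1 := by
  classical
  have h0 : 0 ≤ Q i i := (nonneg_iff_posSemidef.mp hQ.nonneg).diag_nonneg
  have h1 : 0 ≤ (1 - Q) i i := (nonneg_iff_posSemidef.mp hQ.one_sub_nonneg).diag_nonneg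
  rw [RCLike.nonneg_iff] at h0 h1
  simp only [sub_apply, one_apply_eq, map_sub, RCLike.one_re, sub_nonneg] at h1
  exact ⟨h0.1, h1.1⟩

theorem Matrix.IsHermitian.trace_mul_eq_sum_eigenvalues_mul {𝕜 ι : Type*} [RCLike 𝕜] [Fintype ι]
    [DecidableEq ι] {A : Matrix ι ι 𝕜} (hA : A.IsHermitian) (B : Matrix ι ι 𝕜) :
    (A * B).trace = ∑ i, (hA.eigenvalues i : 𝕜) *
      (Unitary.conjStarAlgAut 𝕜 _ (star hA.eigenvectorUnitary) B) i i := by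
  set conj := Unitary.conjStarAlgAut 𝕜 (Matrix ι ι 𝕜)
  have hB : B = conj hA.eigenvectorUnitary (conj (star hA.eigenvectorUnitary) B) := by
    rw [← Unitary.conjStarAlgAut_mul_apply, Unitary.mul_star_self, map_one, StarAlgEquiv.one_apply]
  conv_lhs => rw [hA.spectral_theorem, hB, ← map_mul, trace_map']
  simp [Matrix.trace, diagonal_mul]

/-- Ky Fan maximum principle: for Hermitian `O` and an orthogonal projection `P`
of rank `m`, `Tr(P O P)` is at most the sum of the `m` largest eigenvalues of `O`. -/
theorem ky_fan_maximum_principle {n m : ℕ} (O P : Matrix (Fin n) (Fin n) ℂ)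
    (hO : O.IsHermitian) (hP : P.IsHermitian) (hP2 : P * P = P)
    (hrank : P.rank = m)
    (μ : Fin n → ℝ) (hμ : IsSortedEig hO μ) :
    (P * O * P).trace.re ≤ pSum μ m := by
  obtain ⟨hanti, σ, hσ⟩ := hμ
  set Q := Unitary.conjStarAlgAut ℂ _ (star hO.eigenvectorUnitary) P
  have hQ : IsStarProjection Q := IsStarProjection.map ⟨hP2, hP⟩ _
  have hPOP : (P * O * P).trace = (O * P).trace := by
    rw [trace_mul_comm, ← Matrix.mul_assoc, hP2, trace_mul_comm]
  have htrace : (P * O * P).trace.re = ∑ i, μ i * (Q (σ i) (σ i)).re := by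
    rw [hPOP, hO.trace_mul_eq_sum_eigenvalues_mul, Complex.re_sum, ← Equiv.sum_comp σ]
    simp only [hσ, Complex.coe_algebraMap, Complex.re_ofReal_mul, Q]
  have hsum : ∑ i, (Q (σ i) (σ i)).re = m := by
    rw [Equiv.sum_comp σ (fun i => (Q i i).re), ← Complex.re_sum]
    change Q.trace.re = m
    rw [trace_map', trace_eq_rank_of_isIdempotentElem hP2, hrank, Complex.natCast_re]
  rw [htrace]
  exact sum_mul_le_pSum hanti (fun i => re_diag_mem_Icc_of_isStarProjection hQ (σ i)) hsum
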